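/- Let a, b, c ≥ 2 be pairwise coprime, n = a*b + a*c + b*c, g ∈ Equiv.Perm (Fin n) with g.cycleType = {a*b, a*c, b*c}, and P = P(⟨g⟩). Let p, q ∈ Fin n lie in the same ⟨g⟩-orbit, i.e. q = g^m p for some m ∈ ℕ. Then the set {v ∈ P | v p q = 0} (the points of P whose matrix entry at position (p, q) vanishes) is a facet of P. -/

import Mathlib

/-!
The entry `v ↦ v p q` is nonnegative on `P`, vanishes at the vertex `g ^ (m + 1)` (`g` has no
fixed points) and equals `1` at `g ^ m`, so it cuts out a proper nonempty exposed face, which is a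
facet once every vertex `g ^ s` with `(g ^ s) p = q` lies in the affine span of the face and
`g ^ m`. The `(i, j)` entry of `g ^ t` is the indicator of a residue class of `t` modulo the length
`ab`, `ac` or `bc` of the cycle through `i`, so weights on `t < abc` summing to zero over every
such residue class give an affine relation `∑ w t • M(g ^ t) = 0` among the vertices. If the cycle
through `p` has length `ab`, then `s ≡ m [MOD ab]`, and by the Chinese remainder theorem the
product of the dipoles `[t ≡ s] - [t ≡ s + 1]` modulo `a` and `b` and `[t ≡ s] - [t ≡ m]` modulo `c`
is such a weight; among the vertices with `(p, q)`-entry `1` it is nonzero only at `g ^ s` and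
`g ^ m`.
-/

/-- The permutation polytope of a subgroup `G` of permutations of `Fin n`:
the convex hull of the permutation matrices of elements of `G`. -/
noncomputable def permPolytope (n : ℕ) (G : Subgroup (Equiv.Perm (Fin n))) :
    Set (Matrix (Fin n) (Fin n) ℝ) :=
  convexHull ℝ {M : Matrix (Fin n) (Fin n) ℝ | ∃ σ ∈ G, M = σ.permMatrix ℝ}

/-- A facet of a polytope `P` is a nonempty proper exposed face of dimension
`dim P - 1`. -/
def IsFacetOf {n : ℕ} (P F : Set (Matrix (Fin n) (Fin n) ℝ)) : Prop :=
  IsExposed ℝ P F ∧ F.Nonempty ∧ F ≠ P ∧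
    Module.finrank ℝ (vectorSpan ℝ F) = Module.finrank ℝ (vectorSpan ℝ P) - 1

open Finset Function

def ResidueSumsVanish (N L : ℕ) (w : ℕ → ℝ) : Prop :=
  ∀ r, ∑ t ∈ (range N).filter (· ≡ r [MOD L]), w t = 0

theorem Nat.ModEq.eq_of_lt_mul {x y s t : ℕ} (hxy : x.Coprime y) (hx : s ≡ t [MOD x])
    (hy : s ≡ t [MOD y]) (hs : s < x * y) (ht : t < x * y) : s = t :=
  ((Nat.modEq_and_modEq_iff_modEq_mul hxy).mp ⟨hx, hy⟩).eq_of_lt_of_lt hs ht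

theorem sum_filter_modEq_eq_sum_range {L M : ℕ} (hLM : L.Coprime M) (hL : L ≠ 0) {φ : ℕ → ℝ}
    (hφ : Periodic φ M) (r : ℕ) :
    ∑ t ∈ (range (L * M)).filter (· ≡ r [MOD L]), φ t = ∑ u ∈ range M, φ u := by
  refine sum_nbij (· % M) (fun t ht => ?_) (fun t₁ ht₁ t₂ ht₂ h => ?_) (fun u hu => ?_)
    (fun t _ => hφ.map_mod_nat t |>.symm)
  · rw [mem_filter, mem_range] at ht
    exact mem_range.mpr (Nat.mod_lt _ (Nat.pos_of_mul_pos_left (by omega : 0 < L * M)))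
  · simp only [coe_filter, mem_range, Set.mem_ofPred_eq] at ht₁ ht₂
    exact Nat.ModEq.eq_of_lt_mul hLM (ht₁.2.trans ht₂.2.symm) h ht₁.1 ht₂.1
  · simp only [coe_range, Set.mem_Iio] at hu
    have hk := (Nat.chineseRemainder hLM r u).2
    refine ⟨Nat.chineseRemainder hLM r u, ?_, ?_⟩
    · simpa using ⟨Nat.chineseRemainder_lt_mul hLM r u hL (by omega), hk.1⟩
    · simpa [Nat.ModEq, Nat.mod_eq_of_lt hu] using hk.2

theorem ResidueSumsVanish.of_mul {N L M : ℕ} (hN : L * M = N) (hLM : L.Coprime M) (hL : L ≠ 0)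
    {ψ φ : ℕ → ℝ} (hψ : Periodic ψ L) (hφ : Periodic φ M) (hφ₀ : ∑ u ∈ range M, φ u = 0) :
    ResidueSumsVanish N L (ψ * φ) := by
  intro r
  have hψr : ∀ t ∈ (range (L * M)).filter (· ≡ r [MOD L]), (ψ * φ) t = ψ r * φ t := by
    intro t ht
    rw [Pi.mul_apply, ← hψ.map_mod_nat t, (mem_filter.mp ht).2, hψ.map_mod_nat]
  rw [← hN, sum_congr rfl hψr, ← mul_sum, sum_filter_modEq_eq_sum_range hLM hL hφ, hφ₀, mul_zero]

theorem ResidueSumsVanish.sum_range_eq_zero {N L : ℕ} {w : ℕ → ℝ} (h : ResidueSumsVanish N L w)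
    (hL : L ≠ 0) : ∑ t ∈ range N, w t = 0 := by
  rw [← sum_fiberwise_of_maps_to (g := (· % L)) (t := range L)
    (fun t _ => mem_range.mpr (Nat.mod_lt t (Nat.pos_of_ne_zero hL)))]
  refine sum_eq_zero fun r hr => ?_
  simpa [Nat.ModEq, Nat.mod_eq_of_lt (mem_range.mp hr)] using h r

def dipole (M a b : ℕ) : ℕ → ℝ :=
  fun t => (if t % M = a % M then 1 else 0) - (if t % M = b % M then 1 else 0)

theorem dipole_periodic (M a b : ℕ) : Periodic (dipole M a b) M := by
  intro t
  simp [dipole]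

theorem sum_range_dipole {M : ℕ} (hM : M ≠ 0) (a b : ℕ) : ∑ t ∈ range M, dipole M a b t = 0 := by
  have hone : ∀ a, ∑ t ∈ range M, (if t % M = a % M then (1 : ℝ) else 0) = 1 := fun a => by
    rw [sum_congr rfl fun t ht => by rw [Nat.mod_eq_of_lt (mem_range.mp ht)],
      sum_ite_eq', if_pos (mem_range.mpr (Nat.mod_lt a (Nat.pos_of_ne_zero hM)))]
  simp only [dipole, sum_sub_distrib, hone, sub_self]

theorem dipole_apply_left {M a b : ℕ} (h : ¬a ≡ b [MOD M]) : dipole M a b a = 1 := by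
  simp [dipole, show ¬a % M = b % M from h]

theorem dipole_apply_of_not_modEq {M a b t : ℕ} (ha : ¬t ≡ a [MOD M]) (hb : ¬t ≡ b [MOD M]) :
    dipole M a b t = 0 := by
  simp [dipole, show ¬t % M = a % M from ha, show ¬t % M = b % M from hb]

theorem Nat.not_modEq_succ {M : ℕ} (hM : 2 ≤ M) (s : ℕ) : ¬s ≡ s + 1 [MOD M] := by
  intro h
  have := (Nat.modEq_iff_dvd' (Nat.le_succ s)).mp h
  simp at this
  omega

theorem exists_residue_weights {x y z : ℕ} (hx : 2 ≤ x) (hy : 2 ≤ y) (hxy : x.Coprime y)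
    (hxz : x.Coprime z) (hyz : y.Coprime z) {s m : ℕ} (hs : s < x * y * z) (hm : m < x * y * z)
    (hsm : s ≠ m) (hmod : s ≡ m [MOD x * y]) :
    ∃ w : ℕ → ℝ, w s ≠ 0 ∧ (∀ t < x * y * z, t ≡ m [MOD x * y] → t ≠ s → t ≠ m → w t = 0) ∧
      ResidueSumsVanish (x * y * z) (x * y) w ∧ ResidueSumsVanish (x * y * z) (x * z) w ∧
      ResidueSumsVanish (x * y * z) (y * z) w := by
  have hz : z ≠ 0 := by rintro rfl; simp at hs
  have hxy_z : (x * y).Coprime z := hxz.mul_left hyz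
  have hsz : ¬s ≡ m [MOD z] := fun h => hsm (hmod.eq_of_lt_mul hxy_z h hs hm)
  set dx := dipole x s (s + 1)
  set dy := dipole y s (s + 1)
  set dz := dipole z s m
  have hdx : Periodic dx x := dipole_periodic _ _ _
  have hdy : Periodic dy y := dipole_periodic _ _ _
  have hdz : Periodic dz z := dipole_periodic _ _ _
  refine ⟨dx * dy * dz, ?_, ?_, ?_, ?_, ?_⟩
  · simp [dx, dy, dz, dipole_apply_left (Nat.not_modEq_succ hx s),
      dipole_apply_left (Nat.not_modEq_succ hy s), dipole_apply_left hsz]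
  · intro t ht htm hts htm'
    exact mul_eq_zero_of_right _ (dipole_apply_of_not_modEq
      (fun h => hts ((htm.trans hmod.symm).eq_of_lt_mul hxy_z h ht hs))
      (fun h => htm' (htm.eq_of_lt_mul hxy_z h ht hm)))
  · refine .of_mul rfl hxy_z (by positivity) (.mul ?_ (hdy.nat_mul x)) hdz (sum_range_dipole hz ..)
    simpa [mul_comm] using hdx.nat_mul y
  · rw [show dx * dy * dz = dx * dz * dy from mul_right_comm ..]
    refine .of_mul (Nat.mul_right_comm x z y) (hxy.mul_left hyz.symm) (by positivity)
      (.mul ?_ (hdz.nat_mul x)) hdy (sum_range_dipole (by omega) ..)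
    simpa [mul_comm] using hdx.nat_mul z
  · rw [show dx * dy * dz = dy * dz * dx by ring]
    refine .of_mul (by ring) (hxy.symm.mul_left hxz.symm) (by positivity)
      (.mul ?_ (hdz.nat_mul y)) hdx (sum_range_dipole (by omega) ..)
    simpa [mul_comm] using hdy.nat_mul z

theorem exists_residue_weights_of_mem {a b c : ℕ} (ha : 2 ≤ a) (hb : 2 ≤ b) (hc : 2 ≤ c)
    (hab : a.Coprime b) (hac : a.Coprime c) (hbc : b.Coprime c) {L₀ : ℕ}
    (hL₀ : L₀ ∈ ({a * b, a * c, b * c} : Multiset ℕ)) {s m : ℕ} (hs : s < a * b * c)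
    (hm : m < a * b * c) (hsm : s ≠ m) (hmod : s ≡ m [MOD L₀]) :
    ∃ w : ℕ → ℝ, w s ≠ 0 ∧ (∀ t < a * b * c, t ≡ m [MOD L₀] → t ≠ s → t ≠ m → w t = 0) ∧
      ∀ L ∈ ({a * b, a * c, b * c} : Multiset ℕ), ResidueSumsVanish (a * b * c) L w := by
  simp only [Multiset.insert_eq_cons, Multiset.mem_cons, Multiset.mem_singleton, forall_eq_or_imp,
    forall_eq] at hL₀ ⊢
  rcases hL₀ with rfl | rfl | rfl
  · obtain ⟨w, hws, hw₀, h₁, h₂, h₃⟩ := exists_residue_weights ha hb hab hac hbc hs hm hsm hmod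
    exact ⟨w, hws, hw₀, h₁, h₂, h₃⟩
  · have hN : a * c * b = a * b * c := Nat.mul_right_comm a c b
    obtain ⟨w, hws, hw₀, h₁, h₂, h₃⟩ := exists_residue_weights ha hc hac hab hbc.symm
      (hN ▸ hs) (hN ▸ hm) hsm hmod
    rw [hN] at hw₀ h₁ h₂ h₃
    exact ⟨w, hws, hw₀, h₂, h₁, Nat.mul_comm c b ▸ h₃⟩
  · have hN : b * c * a = a * b * c := by ring
    obtain ⟨w, hws, hw₀, h₁, h₂, h₃⟩ := exists_residue_weights hb hc hbc hab.symm hac.symm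
      (hN ▸ hs) (hN ▸ hm) hsm hmod
    rw [hN] at hw₀ h₁ h₂ h₃
    exact ⟨w, hws, hw₀, Nat.mul_comm b a ▸ h₂, Nat.mul_comm c a ▸ h₃, h₁⟩

namespace Equiv.Perm

variable {α : Type*} [DecidableEq α]

theorem permMatrix_apply {R : Type*} [Zero R] [One R] (σ : Perm α) (i j : α) :
    σ.permMatrix R i j = if σ i = j then 1 else 0 := by
  simp [permMatrix, PEquiv.toMatrix_apply, Option.mem_def, eq_comm]

variable [Fintype α]

theorem pow_apply_eq_pow_apply_iff {g : Perm α} {i : α} (hi : i ∈ g.support) {s t : ℕ} :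
    (g ^ s) i = (g ^ t) i ↔ s ≡ t [MOD #(g.cycleOf i).support] :=
  (g.isCycleOn_support_cycleOf i).pow_apply_eq_pow_apply
    (mem_support_cycleOf_iff.mpr ⟨.refl _ _, hi⟩)

theorem sum_smul_permMatrix_pow_eq_zero (g : Perm α) {N : ℕ} {w : ℕ → ℝ}
    (hw : ∀ i ∈ g.support, ResidueSumsVanish N #(g.cycleOf i).support w)
    (hsum : ∑ t ∈ range N, w t = 0) :
    ∑ t ∈ range N, w t • (g ^ t).permMatrix ℝ = 0 := by
  ext i j
  simp only [Matrix.sum_apply, Matrix.smul_apply, permMatrix_apply, smul_eq_mul, mul_ite, mul_one,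
    mul_zero, ← sum_filter, Matrix.zero_apply]
  by_cases hj : ∃ t₀, (g ^ t₀) i = j
  · obtain ⟨t₀, rfl⟩ := hj
    by_cases hi : i ∈ g.support
    · rw [filter_congr fun t _ => pow_apply_eq_pow_apply_iff hi]
      exact hw i hi t₀
    · have hfix (t : ℕ) : (g ^ t) i = i :=
        pow_apply_eq_self_of_apply_eq_self (notMem_support.mp hi) t
      rwa [filter_true_of_mem fun t _ => by rw [hfix, hfix]]
  · simp only [not_exists] at hj
    rw [filter_false_of_mem fun t _ => hj t, sum_empty]

end Equiv.Perm

theorem nonneg_of_mem_permPolytope {n : ℕ} {G : Subgroup (Equiv.Perm (Fin n))}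
    {v : Matrix (Fin n) (Fin n) ℝ} (hv : v ∈ permPolytope n G) (i j : Fin n) : 0 ≤ v i j := by
  refine convexHull_min ?_ (convex_halfSpace_ge (Matrix.entryLinearMap ℝ ℝ i j).isLinear 0) hv
  rintro _ ⟨σ, -, rfl⟩
  simp only [Set.mem_ofPred_eq, Matrix.entryLinearMap_apply, Equiv.Perm.permMatrix_apply]
  split_ifs <;> norm_num

theorem isExposed_setOf_eq_zero {E : Type*} [AddCommGroup E] [TopologicalSpace E] [Module ℝ E]
    {A : Set E} {l : StrongDual ℝ E} (hl : ∀ x ∈ A, 0 ≤ l x) :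
    IsExposed ℝ A {x ∈ A | l x = 0} := by
  rintro ⟨x₀, hx₀, hlx₀⟩
  refine ⟨-l, Set.ext fun x => ⟨fun ⟨hx, hlx⟩ => ⟨hx, fun y hy => ?_⟩, fun ⟨hx, hmax⟩ => ⟨hx, ?_⟩⟩⟩
  · simpa [hlx] using hl y hy
  · exact le_antisymm (by simpa [hlx₀] using hmax x₀ hx₀) (hl x hx)

theorem finrank_vectorSpan_eq_sub_one {V : Type*} [AddCommGroup V] [Module ℝ V]
    [FiniteDimensional ℝ V] {F P : Set V} {φ : V →ₗ[ℝ] ℝ} {x : V} (hFP : F ⊆ P) (hF : F.Nonempty)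
    (hφF : ∀ v ∈ F, φ v = 0) (hx : x ∈ P) (hφx : φ x ≠ 0) (hP : P ⊆ affineSpan ℝ (insert x F)) :
    Module.finrank ℝ (vectorSpan ℝ F) = Module.finrank ℝ (vectorSpan ℝ P) - 1 := by
  obtain ⟨f, hf⟩ := hF
  have hker : vectorSpan ℝ F ≤ LinearMap.ker φ := by
    rw [vectorSpan_def, Submodule.span_le]
    rintro _ ⟨u, hu, v, hv, rfl⟩
    simp [hφF u hu, hφF v hv]
  have hlt : vectorSpan ℝ F < vectorSpan ℝ P :=
    SetLike.lt_iff_le_and_exists.mpr ⟨vectorSpan_mono ℝ hFP, x -ᵥ f,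
      vsub_mem_vectorSpan ℝ hx (hFP hf), fun h => hφx (by simpa [hφF f hf] using hker h)⟩
  have hle : vectorSpan ℝ P ≤ vectorSpan ℝ (insert x F) := by
    rw [← direction_affineSpan, ← direction_affineSpan ℝ (insert x F)]
    exact AffineSubspace.direction_le (affineSpan_le.mpr hP)
  have := Submodule.finrank_lt_finrank_of_lt hlt
  have := (Submodule.finrank_mono hle).trans (finrank_vectorSpan_insert_le_set ℝ F x)
  omega

theorem AffineSubspace.mem_of_sum_smul_eq_zero {ι V : Type*} [AddCommGroup V] [Module ℝ V]
    (A : AffineSubspace ℝ V) {S : Finset ι} {v : ι → V} {w : ι → ℝ}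
    (hrel : ∑ t ∈ S, w t • v t = 0) (hsum : ∑ t ∈ S, w t = 0) {i : ι} (hi : i ∈ S)
    (hwi : w i ≠ 0) (hA : ∀ t ∈ S, t ≠ i → w t ≠ 0 → v t ∈ A) : v i ∈ A := by
  classical
  obtain ⟨j, hj, hji, hwj⟩ : ∃ j ∈ S, j ≠ i ∧ w j ≠ 0 := by
    by_contra! h
    exact hwi (by rwa [sum_eq_single i h (absurd hi)] at hsum)
  have hx := hA j hj hji hwj
  have hrel' : w i • (v i -ᵥ v j) + ∑ t ∈ S.erase i, w t • (v t -ᵥ v j) = 0 := by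
    rw [add_sum_erase S (fun t => w t • (v t -ᵥ v j)) hi]
    simp [smul_sub, sum_sub_distrib, ← sum_smul, hrel, hsum]
  have hdir : w i • (v i -ᵥ v j) ∈ A.direction := by
    rw [eq_neg_of_add_eq_zero_left hrel']
    refine neg_mem (sum_mem fun t ht => ?_)
    obtain ⟨hti, htS⟩ := mem_erase.mp ht
    by_cases hwt : w t = 0
    · simp [hwt]
    · exact A.direction.smul_mem _ (A.vsub_mem_direction (hA t htS hti hwt) hx)
  have := A.direction.smul_mem (w i)⁻¹ hdir
  rw [inv_smul_smul₀ hwi] at this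
  simpa using AffineSubspace.vadd_mem_of_mem_direction this hx

namespace Equiv.Perm

variable {α : Type*} [Fintype α] [DecidableEq α] {g : Perm α}

theorem support_eq_univ_of_sum_cycleType (h : g.cycleType.sum = Fintype.card α) :
    g.support = univ :=
  eq_univ_of_card _ (g.sum_cycleType ▸ h)

theorem card_support_cycleOf_mem_cycleType {i : α} (hi : i ∈ g.support) :
    #(g.cycleOf i).support ∈ g.cycleType := by
  rw [cycleType_def]
  exact Multiset.mem_map_of_mem _ (cycleOf_mem_cycleFactorsFinset_iff.mpr hi)

end Equiv.Perm

theorem permMatrix_mem_permPolytope {n : ℕ} {G : Subgroup (Equiv.Perm (Fin n))}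
    {σ : Equiv.Perm (Fin n)} (hσ : σ ∈ G) : σ.permMatrix ℝ ∈ permPolytope n G :=
  subset_convexHull ℝ _ ⟨σ, hσ, rfl⟩

section ThreeCycles

open Equiv.Perm

variable {a b c n : ℕ} {g : Equiv.Perm (Fin n)}

theorem support_eq_univ_of_three_cycles (hn : n = a * b + a * c + b * c)
    (hg : g.cycleType = {a * b, a * c, b * c}) : g.support = univ :=
  support_eq_univ_of_sum_cycleType (by simp [hg, hn, add_assoc])

theorem orderOf_dvd_of_three_cycles (hg : g.cycleType = {a * b, a * c, b * c}) :
    orderOf g ∣ a * b * c := by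
  rw [← lcm_cycleType, hg, Multiset.lcm_dvd]
  simp only [Multiset.insert_eq_cons, Multiset.mem_cons, Multiset.mem_singleton, forall_eq_or_imp,
    forall_eq]
  exact ⟨⟨c, rfl⟩, ⟨b, by ring⟩, ⟨a, by ring⟩⟩

theorem permMatrix_mem_affineSpan_of_three_cycles (ha : 2 ≤ a) (hb : 2 ≤ b) (hc : 2 ≤ c)
    (hab : a.Coprime b) (hac : a.Coprime c) (hbc : b.Coprime c) (hn : n = a * b + a * c + b * c)
    (hg : g.cycleType = {a * b, a * c, b * c}) (p : Fin n) (m : ℕ) {σ : Equiv.Perm (Fin n)}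
    (hσ : σ ∈ Subgroup.zpowers g) :
    σ.permMatrix ℝ ∈ affineSpan ℝ (insert ((g ^ m).permMatrix ℝ)
      {v ∈ permPolytope n (Subgroup.zpowers g) | v p ((g ^ m) p) = 0}) := by
  have hp : p ∈ g.support := support_eq_univ_of_three_cycles hn hg ▸ mem_univ p
  have hN := Nat.le_of_dvd (by positivity) (orderOf_dvd_of_three_cycles hg)
  obtain ⟨s, hs, rfl⟩ := mem_image.mp (mem_zpowers_iff_mem_range_orderOf.mp hσ)
  rw [mem_range] at hs
  rw [← pow_mod_orderOf g m]
  set m' := m % orderOf g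
  have hm' : m' < orderOf g := Nat.mod_lt m (orderOf_pos g)
  set F := {v ∈ permPolytope n (Subgroup.zpowers g) | v p ((g ^ m') p) = 0}
  have hF : ∀ t, (g ^ t) p ≠ (g ^ m') p → (g ^ t).permMatrix ℝ ∈ insert ((g ^ m').permMatrix ℝ) F :=
    fun t ht => Set.mem_insert_of_mem _
      ⟨permMatrix_mem_permPolytope (Subgroup.npow_mem_zpowers g t), by simp [ht]⟩
  by_cases hsq : (g ^ s) p = (g ^ m') p
  swap
  · exact subset_affineSpan ℝ _ (hF s hsq)
  by_cases hsm : s = m'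
  · exact subset_affineSpan ℝ _ (hsm ▸ Set.mem_insert _ _)
  obtain ⟨w, hws, hw₀, hw⟩ := exists_residue_weights_of_mem ha hb hc hab hac hbc
    (hg ▸ card_support_cycleOf_mem_cycleType hp) (by omega) (by omega) hsm
    ((pow_apply_eq_pow_apply_iff hp).mp hsq)
  have hrel := g.sum_smul_permMatrix_pow_eq_zero
    (fun i hi => hw _ (hg ▸ card_support_cycleOf_mem_cycleType hi))
  have hsum := (hw (a * b) (by simp)).sum_range_eq_zero (by positivity)
  refine (affineSpan ℝ _).mem_of_sum_smul_eq_zero (hrel hsum) hsum (mem_range.mpr (by omega)) hws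
    fun t ht hts hwt => subset_affineSpan ℝ _ ?_
  by_cases htq : (g ^ t) p = (g ^ m') p
  · obtain rfl : t = m' := by
      by_contra htm
      exact hwt (hw₀ t (mem_range.mp ht) ((pow_apply_eq_pow_apply_iff hp).mp htq) hts htm)
    exact Set.mem_insert _ _
  · exact hF t htq

end ThreeCycles

/-- For `P = P(a,b,c)` and positions `p, q` of `Fin n` in the same `⟨g⟩`-orbit, the set of
points of `P` whose `(p, q)` matrix entry vanishes is a facet of `P`. -/
theorem coordinate_facet_three_cycles
    (a b c : ℕ) (ha : 2 ≤ a) (hb : 2 ≤ b) (hc : 2 ≤ c)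
    (hab : Nat.Coprime a b) (hac : Nat.Coprime a c) (hbc : Nat.Coprime b c)
    (n : ℕ) (hn : n = a * b + a * c + b * c)
    (g : Equiv.Perm (Fin n))
    (hg : g.cycleType = {a * b, a * c, b * c})
    (p q : Fin n) (m : ℕ) (hq : q = (g ^ m) p) :
    IsFacetOf (permPolytope n (Subgroup.zpowers g))
      {v ∈ permPolytope n (Subgroup.zpowers g) | v p q = 0} := by
  subst hq
  set P := permPolytope n (Subgroup.zpowers g)
  set φ := Matrix.entryLinearMap ℝ ℝ p ((g ^ m) p)
  have hx : (g ^ m).permMatrix ℝ ∈ P := permMatrix_mem_permPolytope (Subgroup.npow_mem_zpowers g m)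
  have hx₁ : φ ((g ^ m).permMatrix ℝ) = 1 := by simp [φ]
  have hgp : g ((g ^ m) p) ≠ (g ^ m) p :=
    Equiv.Perm.mem_support.mp (support_eq_univ_of_three_cycles hn hg ▸ mem_univ _)
  have hy : (g ^ (m + 1)).permMatrix ℝ ∈ {v ∈ P | v p ((g ^ m) p) = 0} :=
    ⟨permMatrix_mem_permPolytope (Subgroup.npow_mem_zpowers g _), by simp [pow_succ', hgp]⟩
  refine ⟨isExposed_setOf_eq_zero (l := LinearMap.toContinuousLinearMap φ)
      fun v hv => nonneg_of_mem_permPolytope hv _ _, ⟨_, hy⟩, fun h => ?_,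
    finrank_vectorSpan_eq_sub_one (fun v hv => hv.1) ⟨_, hy⟩ (fun v hv => hv.2) hx
      (by rw [hx₁]; exact one_ne_zero) ?_⟩
  · exact one_ne_zero (hx₁.symm.trans (h ▸ hx : _ ∈ {v ∈ P | v p ((g ^ m) p) = 0}).2)
  · refine (convexHull_subset_affineSpan _).trans (affineSpan_le.mpr ?_)
    rintro _ ⟨σ, hσ, rfl⟩
    exact permMatrix_mem_affineSpan_of_three_cycles ha hb hc hab hac hbc hn hg p m hσ
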